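/- Let $C = \mathbb{C}[\lambda^1,\lambda^2, v^1, v^2, v^3]$ be the free graded-commutative algebra with even generators $\lambda^\alpha$ in degree $0$ and odd generators $v^\mu$ in degree $-1$, with differential $d v^1 = (\lambda^1)^2$, $d v^2 = \lambda^1\lambda^2$, $d v^3 = (\lambda^2)^2$, $d\lambda^\alpha = 0$. Then the cohomology $H^k(C)$ vanishes for all $k \le -2$ (i.e., the only nonvanishing cohomology groups are $H^0 = \mathbb{C}[\lambda]/((\lambda^1)^2,\lambda^1\lambda^2,(\lambda^2)^2)$ and $H^{-1}$). -/

import Mathlib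

/-!
The degree `-3` and `-2` parts of the complex form the tail `R → R³ → R³` of the Koszul-type
complex on `x², xy, y²` over `R = ℂ[x, y]`. Since `x` is prime and does not divide `y`, a cycle
`(a₀, a₁, a₂)` of degree `-2` is peeled apart one factor of `x` at a time: the relation
`a₀ xy + a₁ x² = 0` forces `a₀ = b x`, `a₁ = -b y`, and then `a₂ x² = a₀ y²` forces `b = c x`,
`a₂ = c y²`, i.e. the cycle is `d₋₃ c`. Injectivity of `d₋₃` holds because `R` is a domain.
-/

open MvPolynomial

noncomputable abbrev R4 := MvPolynomial (Fin 2) ℂ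

/-- the quadrics `q₁ = (λ¹)², q₂ = λ¹λ², q₃ = (λ²)²` -/
noncomputable def q4 : Fin 3 → R4 := ![(X 0) ^ 2, X 0 * X 1, (X 1) ^ 2]

/-- `d₋₂ : Λ² → Λ¹`, with `d(vⁱ∧vʲ) = qᵢ vʲ - qⱼ vⁱ`; Λ²-basis indexed by
`0 ↦ v²∧v³`, `1 ↦ v¹∧v³`, `2 ↦ v¹∧v²`. -/
noncomputable def dMinus2 : (Fin 3 → R4) →ₗ[R4] (Fin 3 → R4) where
  toFun a := fun j =>
    a 0 * ![0, -(q4 2), q4 1] j + a 1 * ![-(q4 2), 0, q4 0] j +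
      a 2 * ![-(q4 1), q4 0, 0] j
  map_add' a b := by
    funext j; fin_cases j <;> simp <;> ring
  map_smul' r a := by
    funext j; fin_cases j <;> simp [smul_eq_mul] <;> ring

/-- `d₋₃ : Λ³ → Λ²`, `d(v¹∧v²∧v³) = q₁ v²∧v³ - q₂ v¹∧v³ + q₃ v¹∧v²`. -/
noncomputable def dMinus3 : R4 →ₗ[R4] (Fin 3 → R4) where
  toFun c := fun j => c * ![q4 0, -(q4 1), q4 2] j
  map_add' a b := by funext j; simp; ring
  map_smul' r a := by funext j; simp [smul_eq_mul]; ring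

theorem Prime.exists_eq_mul_and_eq_mul {M : Type*} [CommMonoidWithZero M] [IsCancelMulZero M]
    {p q a b : M} (hp : Prime p) (hpq : ¬p ∣ q) (h : a * q = b * p) : ∃ c, a = c * p ∧ b = c * q := by
  obtain ⟨c, rfl⟩ := (hp.dvd_or_dvd ⟨b, by rw [h, mul_comm]⟩).resolve_right hpq
  refine ⟨c, mul_comm _ _, mul_left_cancel₀ hp.ne_zero ?_⟩
  rw [← mul_assoc, h, mul_comm]

theorem dMinus2_apply (a : Fin 3 → R4) :
    dMinus2 a = ![-(a 1 * X 1 ^ 2) - a 2 * (X 0 * X 1), -(a 0 * X 1 ^ 2) + a 2 * X 0 ^ 2,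
      a 0 * (X 0 * X 1) + a 1 * X 0 ^ 2] := by
  funext j
  fin_cases j <;> simp only [dMinus2, q4, LinearMap.coe_mk, AddHom.coe_mk] <;> simp
  ring

theorem dMinus3_apply (c : R4) : dMinus3 c = ![c * X 0 ^ 2, -(c * (X 0 * X 1)), c * X 1 ^ 2] := by
  funext j
  fin_cases j <;> simp [dMinus3, q4]

theorem dMinus2_comp_dMinus3 : dMinus2 ∘ₗ dMinus3 = 0 := by
  ext : 1
  funext j
  fin_cases j <;> simp [dMinus2_apply, dMinus3_apply] <;> ring

theorem ker_dMinus2_le_range_dMinus3 : LinearMap.ker dMinus2 ≤ LinearMap.range dMinus3 := by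
  intro a ha
  rw [LinearMap.mem_ker, dMinus2_apply] at ha
  have h₁ : -(a 0 * X 1 ^ 2) + a 2 * X 0 ^ 2 = 0 := by simpa using congrFun ha 1
  have h₂ : a 0 * (X 0 * X 1) + a 1 * X 0 ^ 2 = 0 := by simpa using congrFun ha 2
  have hx : Prime (X 0 : R4) := X_prime
  have hxy : ¬(X 0 : R4) ∣ X 1 := by simp [X_dvd_X]
  have h₂' : a 0 * X 1 = -a 1 * X 0 :=
    mul_left_cancel₀ hx.ne_zero (by linear_combination h₂)
  obtain ⟨b, ha₀, ha₁⟩ := hx.exists_eq_mul_and_eq_mul hxy h₂'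
  have h₁' : b * X 1 ^ 2 = a 2 * X 0 :=
    mul_left_cancel₀ hx.ne_zero (by linear_combination -h₁ - X 1 ^ 2 * ha₀)
  obtain ⟨c, hb, ha₂⟩ :=
    hx.exists_eq_mul_and_eq_mul (fun h ↦ hxy (hx.dvd_of_dvd_pow h)) h₁'
  refine ⟨c, funext fun j ↦ ?_⟩
  fin_cases j <;> simp [dMinus3_apply]
  · linear_combination -ha₀ - X 0 * hb
  · linear_combination ha₁ + X 1 * hb
  · linear_combination -ha₂

theorem ker_dMinus3_eq_bot : LinearMap.ker dMinus3 = ⊥ := by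
  rw [LinearMap.ker_eq_bot']
  intro c hc
  simpa [dMinus3_apply, X_ne_zero] using congrFun hc 0

theorem CE_cohomology_3dN1_vanishes_below_degree_minus_one :
    LinearMap.ker dMinus2 = LinearMap.range dMinus3 ∧
    LinearMap.ker dMinus3 = ⊥ :=
  ⟨ker_dMinus2_le_range_dMinus3.antisymm (LinearMap.range_le_ker_iff.mpr dMinus2_comp_dMinus3),
    ker_dMinus3_eq_bot⟩
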